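/- arXiv:2111.05693 — 3 statements merged into one kernel-verified Lean document; each statement's English description precedes it below -/
import Mathlib

section
/- Let ω be a majorant, i an imaginary unit, and f a slice regular function on D⁴. If there exists C > 0 such that ‖f(x) − f(y)‖ ≤ C·ω(‖x − y‖) for all x, y ∈ D_i, then there exists L > 0 such that ‖f(p) − f(q)‖ ≤ L·ω(‖p − q‖) for all p, q ∈ D⁴. In other words, a slice regular function that is ω-Lipschitz on one slice disc is ω-Lipschitz on the whole unit ball. -/
noncomputable section

notation "ℍ" => Quaternion ℝ

def IsImaginaryUnit (i : ℍ) : Prop := i.re = 0 ∧ ‖i‖ = 1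

def OrthogonalUnits (i j : ℍ) : Prop :=
  IsImaginaryUnit i ∧ IsImaginaryUnit j ∧ (i * star j).re = 0

def qslice (i : ℍ) : Set ℍ := {z | ∃ x y : ℝ, z = (x : ℍ) + y • i}

def sliceDisc (i : ℍ) : Set ℍ := {z ∈ qslice i | ‖z‖ < 1}

def sliceCircle (i : ℍ) : Set ℍ := {z ∈ qslice i | ‖z‖ = 1}

def unitBall : Set ℍ := {q : ℍ | ‖q‖ < 1}

structure IsMajorant (ω : ℝ → ℝ) : Prop where
  contOn : ContinuousOn ω (Set.Icc 0 2)
  map_zero : ω 0 = 0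
  nonneg : ∀ t ∈ Set.Icc (0:ℝ) 2, 0 ≤ ω t
  mono : MonotoneOn ω (Set.Icc 0 2)
  div_anti : AntitoneOn (fun t => ω t / t) (Set.Ioc 0 2)

def IsRegularMajorant (ω : ℝ → ℝ) : Prop :=
  IsMajorant ω ∧ ∃ C > 0, ∀ x : ℝ, 0 < x → x < 2 →
    (∫ t in (0:ℝ)..x, ω t / t) + x * (∫ t in x..(2:ℝ), ω t / t ^ 2) ≤ C * ω x

def SliceRegularOn (f : ℍ → ℍ) (a : ℕ → ℍ) : Prop :=
  (∀ r : ℝ, 0 ≤ r → r < 1 → Summable (fun n => ‖a n‖ * r ^ n)) ∧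
  (∀ q ∈ unitBall, HasSum (fun n => q ^ n * a n) (f q))

def IsSliceRegular (f : ℍ → ℍ) : Prop := ∃ a : ℕ → ℍ, SliceRegularOn f a

def SliceDeriv (f f' : ℍ → ℍ) (a : ℕ → ℍ) : Prop :=
  SliceRegularOn f a ∧
  (∀ q ∈ unitBall, HasSum (fun n => ((n + 1 : ℕ) : ℝ) • (q ^ n * a (n + 1))) (f' q))

def expI (i : ℍ) (t : ℝ) : ℍ := (Real.cos t : ℍ) + Real.sin t • i

def poisson (i : ℍ) (u : ℍ → ℝ) (q : ℍ) : ℝ :=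
  (1 / (2 * Real.pi)) * ∫ t in (0:ℝ)..(2 * Real.pi),
    u (expI i t) * (1 - ‖q‖ ^ 2) / ‖q - expI i t‖ ^ 2

def comp1 (i : ℍ) (f : ℍ → ℍ) : ℍ → ℍ := fun q => (2⁻¹ : ℝ) • (f q - i * f q * i)

def comp2 (i j : ℍ) (f : ℍ → ℍ) : ℍ → ℍ := fun q => ((2⁻¹ : ℝ) • (f q + i * f q * i)) * j⁻¹

/-! Summing the power series componentwise gives `f (x + y J) = α z + J β z` with `z = x + y I`
and `α`, `β` independent of the imaginary unit `J`. Taking `J = ±i` yields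
`α z = (g z + g (conj z)) / 2` and `β z = i (g (conj z) - g z) / 2`, where `g` is the
restriction of `f` to the slice of `i`; hence `α` and `β` inherit the `ω`-Lipschitz bound of `g`.
Writing `p = x_p + y_p J_p`, `q = x_q + y_q J_q` with `y ≥ 0`,
`f p - f q = (α z_p - α z_q) + J_p (β z_p - β z_q) + (J_p - J_q) β z_q`.
The first two terms are controlled because `|z_p - z_q| ≤ |p - q|`. For the third, `β` is odd
under conjugation, so `|β z_q| ≤ C ω (2 y_q) / 2`, while `y_q |J_p - J_q| ≤ 2 |p - q|`; as `ω t / t`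
is decreasing this gives `|J_p - J_q| ω (2 y_q) ≤ 4 ω |p - q|`, and `L = 4 C` works. -/

namespace IsImaginaryUnit

variable {J : ℍ} (hJ : IsImaginaryUnit J)
include hJ

lemma im_eq : J.im = J := by
  rw [← Quaternion.sub_re_self, hJ.1, Quaternion.coe_zero, sub_zero]

lemma mul_self : J * J = -1 := by
  have h := Quaternion.im_sq (a := J)
  rw [hJ.im_eq, Quaternion.normSq_eq_norm_mul_self, hJ.2, sq] at h
  simpa using h

end IsImaginaryUnit

lemma Quaternion.norm_sq_eq_re_sq_add_norm_im_sq (q : ℍ) :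
    ‖q‖ ^ 2 = q.re ^ 2 + ‖q.im‖ ^ 2 := by
  simp only [sq, ← Quaternion.normSq_eq_norm_mul_self, Quaternion.normSq_def']
  simp
  ring

lemma Quaternion.norm_im_le (q : ℍ) : ‖q.im‖ ≤ ‖q‖ := by
  rw [← sq_le_sq₀ (norm_nonneg _) (norm_nonneg _), Quaternion.norm_sq_eq_re_sq_add_norm_im_sq q]
  nlinarith [sq_nonneg q.re]

def sliceEmb (J : ℍ) (hJ : IsImaginaryUnit J) : ℂ →ₐ[ℝ] ℍ := Complex.liftAux J hJ.mul_self

section sliceEmb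

variable {J : ℍ} (hJ : IsImaginaryUnit J)

lemma sliceEmb_apply (z : ℂ) : sliceEmb J hJ z = (z.re : ℍ) + z.im • J :=
  Complex.liftAux_apply J hJ.mul_self z

lemma norm_sliceEmb (z : ℂ) : ‖sliceEmb J hJ z‖ = ‖z‖ := by
  have hre : (sliceEmb J hJ z).re = z.re := by simp [sliceEmb_apply, hJ.1]
  have him : (sliceEmb J hJ z).im = z.im • J := by
    simp [sliceEmb_apply, hJ.im_eq]
  have h := Quaternion.norm_sq_eq_re_sq_add_norm_im_sq (sliceEmb J hJ z)
  rw [hre, him, norm_smul, hJ.2, mul_one, Real.norm_eq_abs, sq_abs] at h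
  rw [← sq_eq_sq₀ (norm_nonneg _) (norm_nonneg _), h, Complex.sq_norm, Complex.normSq_apply]
  ring

lemma norm_sliceEmb_sub (z w : ℂ) : ‖sliceEmb J hJ z - sliceEmb J hJ w‖ = ‖z - w‖ := by
  rw [← map_sub, norm_sliceEmb]

lemma sliceEmb_mem_sliceDisc {z : ℂ} (hz : ‖z‖ < 1) : sliceEmb J hJ z ∈ sliceDisc J :=
  ⟨⟨z.re, z.im, sliceEmb_apply hJ z⟩, (norm_sliceEmb hJ z).trans_lt hz⟩

end sliceEmb

def sliceCoord (p : ℍ) : ℂ := ⟨p.re, ‖p.im‖⟩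

lemma norm_sliceCoord (p : ℍ) : ‖sliceCoord p‖ = ‖p‖ := by
  rw [← sq_eq_sq₀ (norm_nonneg _) (norm_nonneg _)]
  simp only [Complex.sq_norm, Complex.normSq_mk, sliceCoord,
    Quaternion.norm_sq_eq_re_sq_add_norm_im_sq p]
  ring

lemma norm_sliceCoord_sub_le (p q : ℍ) : ‖sliceCoord p - sliceCoord q‖ ≤ ‖p - q‖ := by
  rw [← sq_le_sq₀ (norm_nonneg _) (norm_nonneg _)]
  have hy : |‖p.im‖ - ‖q.im‖| ≤ ‖p.im - q.im‖ := abs_norm_sub_norm_le _ _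
  have hy2 := sq_le_sq' (abs_le.1 hy).1 (abs_le.1 hy).2
  rw [Quaternion.norm_sq_eq_re_sq_add_norm_im_sq, Complex.sq_norm, Complex.normSq_apply]
  simp only [sliceCoord, Complex.sub_re, Complex.sub_im, Quaternion.re_sub, Quaternion.im_sub]
  nlinarith

lemma exists_imaginaryUnit_smul_eq_im (p : ℍ) :
    ∃ J, IsImaginaryUnit J ∧ ‖p.im‖ • J = p.im := by
  by_cases hp : p.im = 0
  · refine ⟨(Complex.I : ℍ), ⟨by simp, ?_⟩, by rw [hp, norm_zero, zero_smul]⟩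
    rw [← sq_eq_sq₀ (norm_nonneg _) zero_le_one, one_pow, sq,
      ← Quaternion.normSq_eq_norm_mul_self, Quaternion.normSq_def']
    simp
  · have hne : ‖p.im‖ ≠ 0 := norm_ne_zero_iff.2 hp
    refine ⟨‖p.im‖⁻¹ • p.im, ⟨by simp, ?_⟩, smul_inv_smul₀ hne _⟩
    rw [norm_smul, norm_inv, norm_norm, inv_mul_cancel₀ hne]

lemma sliceEmb_sliceCoord {J : ℍ} (hJ : IsImaginaryUnit J) {p : ℍ} (hp : ‖p.im‖ • J = p.im) :
    sliceEmb J hJ (sliceCoord p) = p := by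
  rw [sliceEmb_apply, sliceCoord, hp, Quaternion.re_add_im]

lemma mul_norm_sub_le_two_mul_norm_smul_sub {E : Type*} [NormedAddCommGroup E] [NormedSpace ℝ E]
    {u v : E} (hu : ‖u‖ = 1) (hv : ‖v‖ = 1) {a b : ℝ} (ha : 0 ≤ a) (hb : 0 ≤ b) :
    b * ‖u - v‖ ≤ 2 * ‖a • u - b • v‖ := by
  have hab : |b - a| ≤ ‖a • u - b • v‖ := by
    simpa [norm_smul, hu, hv, abs_of_nonneg ha, abs_of_nonneg hb] using
      (abs_norm_sub_norm_le (b • v) (a • u)).trans_eq (norm_sub_rev _ _)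
  calc b * ‖u - v‖ = ‖(b - a) • u + (a • u - b • v)‖ := by
        rw [← norm_smul_of_nonneg hb]; congr 1; module
    _ ≤ |b - a| + ‖a • u - b • v‖ := by
        simpa [norm_smul, hu] using norm_add_le ((b - a) • u) (a • u - b • v)
    _ ≤ 2 * ‖a • u - b • v‖ := by linarith

lemma IsMajorant.mul_le_mul_of_mul_le {ω : ℝ → ℝ} (hω : IsMajorant ω) {s d c k : ℝ}
    (hs : s ∈ Set.Icc 0 2) (hd : d ∈ Set.Ioc 0 2) (hc : 0 ≤ c) (hck : c ≤ k)
    (hcs : c * s ≤ k * d) : c * ω s ≤ k * ω d := by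
  have hd' : d ∈ Set.Icc (0 : ℝ) 2 := Set.Ioc_subset_Icc_self hd
  rcases le_or_gt s d with hsd | hds
  · exact mul_le_mul hck (hω.mono hs hd' hsd) (hω.nonneg s hs) (hc.trans hck)
  · have hs0 : 0 < s := hd.1.trans hds
    have hslope : ω s / s ≤ ω d / d := hω.div_anti hd ⟨hs0, hs.2⟩ hds.le
    rw [div_le_div_iff₀ hs0 hd.1] at hslope
    refine le_of_mul_le_mul_right ?_ hd.1
    calc c * ω s * d ≤ c * s * ω d := by nlinarith
      _ ≤ k * d * ω d := mul_le_mul_of_nonneg_right hcs (hω.nonneg d hd')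
      _ = k * ω d * d := by ring

open ComplexConjugate

def stemFst (a : ℕ → ℍ) (z : ℂ) : ℍ := ∑' n, (z ^ n).re • a n

def stemSnd (a : ℕ → ℍ) (z : ℂ) : ℍ := ∑' n, (z ^ n).im • a n

lemma stemFst_conj (a : ℕ → ℍ) (z : ℂ) : stemFst a (conj z) = stemFst a z := by
  simp only [stemFst, ← map_pow, Complex.conj_re]

lemma stemSnd_conj (a : ℕ → ℍ) (z : ℂ) : stemSnd a (conj z) = -stemSnd a z := by
  simp only [stemSnd, ← map_pow, Complex.conj_im, neg_smul, tsum_neg]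

namespace SliceRegularOn

variable {f : ℍ → ℍ} {a : ℕ → ℍ} (hf : SliceRegularOn f a)
include hf

lemma summable_smul {z : ℂ} (hz : ‖z‖ < 1) {c : ℕ → ℝ} (hc : ∀ n, |c n| ≤ ‖z‖ ^ n) :
    Summable fun n => c n • a n :=
  (hf.1 ‖z‖ (norm_nonneg z) hz).of_norm_bounded fun n => by
    rw [norm_smul, mul_comm, Real.norm_eq_abs]
    exact mul_le_mul_of_nonneg_left (hc n) (norm_nonneg _)

theorem apply_sliceEmb {J : ℍ} (hJ : IsImaginaryUnit J) {z : ℂ} (hz : ‖z‖ < 1) :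
    f (sliceEmb J hJ z) = stemFst a z + J * stemSnd a z := by
  have hre := hf.summable_smul hz fun n => (Complex.abs_re_le_norm _).trans_eq (norm_pow z n)
  have him := hf.summable_smul hz fun n => (Complex.abs_im_le_norm _).trans_eq (norm_pow z n)
  have hterm (n : ℕ) :
      sliceEmb J hJ z ^ n * a n = (z ^ n).re • a n + J * ((z ^ n).im • a n) := by
    rw [← map_pow, sliceEmb_apply, add_mul, Quaternion.coe_mul_eq_smul, smul_mul_assoc,
      mul_smul_comm]
  have hsum := hf.2 _ ((norm_sliceEmb hJ z).trans_lt hz)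
  simp only [hterm] at hsum
  exact hsum.unique (hre.hasSum.add (him.hasSum.mul_left J))

section

variable {i : ℍ} (hi : IsImaginaryUnit i) {z : ℂ} (hz : ‖z‖ < 1)
include hi hz

lemma stemFst_eq :
    stemFst a z = (2⁻¹ : ℝ) • (f (sliceEmb i hi z) + f (sliceEmb i hi (conj z))) := by
  rw [hf.apply_sliceEmb hi hz, hf.apply_sliceEmb hi ((Complex.norm_conj z).trans_lt hz),
    stemFst_conj, stemSnd_conj, mul_neg]
  module

lemma stemSnd_eq :
    stemSnd a z = (2⁻¹ : ℝ) • (i * (f (sliceEmb i hi (conj z)) - f (sliceEmb i hi z))) := by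
  rw [hf.apply_sliceEmb hi hz, hf.apply_sliceEmb hi ((Complex.norm_conj z).trans_lt hz),
    stemFst_conj, stemSnd_conj, mul_neg, ← sub_eq_add_neg,
    show ∀ u v : ℍ, u - v - (u + v) = -(2 : ℝ) • v by intros; module, mul_smul_comm, ← mul_assoc,
    hi.mul_self, neg_one_mul]
  module

end

section

variable {i : ℍ} (hi : IsImaginaryUnit i) {ω : ℝ → ℝ} {C : ℝ}
  (hg : ∀ z w : ℂ, ‖z‖ < 1 → ‖w‖ < 1 →
    ‖f (sliceEmb i hi z) - f (sliceEmb i hi w)‖ ≤ C * ω ‖z - w‖)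
include hi hg

lemma norm_stemFst_sub_le {z w : ℂ} (hz : ‖z‖ < 1) (hw : ‖w‖ < 1) :
    ‖stemFst a z - stemFst a w‖ ≤ C * ω ‖z - w‖ := by
  have hz' := (Complex.norm_conj z).trans_lt hz
  have hw' := (Complex.norm_conj w).trans_lt hw
  have hconj := hg _ _ hz' hw'
  rw [← map_sub, Complex.norm_conj] at hconj
  calc ‖stemFst a z - stemFst a w‖
      = 2⁻¹ * ‖(f (sliceEmb i hi z) - f (sliceEmb i hi w)) +
          (f (sliceEmb i hi (conj z)) - f (sliceEmb i hi (conj w)))‖ := by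
        rw [hf.stemFst_eq hi hz, hf.stemFst_eq hi hw, ← smul_sub, norm_smul, Real.norm_of_nonneg
          (by norm_num)]
        congr 2; abel
    _ ≤ 2⁻¹ * (C * ω ‖z - w‖ + C * ω ‖z - w‖) := by
        gcongr; exact (norm_add_le _ _).trans (add_le_add (hg z w hz hw) hconj)
    _ = C * ω ‖z - w‖ := by ring

lemma norm_stemSnd_sub_le {z w : ℂ} (hz : ‖z‖ < 1) (hw : ‖w‖ < 1) :
    ‖stemSnd a z - stemSnd a w‖ ≤ C * ω ‖z - w‖ := by
  have hz' := (Complex.norm_conj z).trans_lt hz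
  have hw' := (Complex.norm_conj w).trans_lt hw
  have hconj := hg _ _ hz' hw'
  rw [← map_sub, Complex.norm_conj] at hconj
  calc ‖stemSnd a z - stemSnd a w‖
      = 2⁻¹ * ‖(f (sliceEmb i hi (conj z)) - f (sliceEmb i hi (conj w))) -
          (f (sliceEmb i hi z) - f (sliceEmb i hi w))‖ := by
        rw [hf.stemSnd_eq hi hz, hf.stemSnd_eq hi hw, ← smul_sub, ← mul_sub, norm_smul,
          Real.norm_of_nonneg (by norm_num), norm_mul, hi.2, one_mul]
        congr 2; abel
    _ ≤ 2⁻¹ * (C * ω ‖z - w‖ + C * ω ‖z - w‖) := by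
        gcongr; exact (norm_sub_le _ _).trans (add_le_add hconj (hg z w hz hw))
    _ = C * ω ‖z - w‖ := by ring

lemma norm_stemSnd_le {z : ℂ} (hz : ‖z‖ < 1) :
    ‖stemSnd a z‖ ≤ 2⁻¹ * (C * ω (2 * |z.im|)) := by
  have hz' := (Complex.norm_conj z).trans_lt hz
  have hdist : ‖conj z - z‖ = 2 * |z.im| := by
    rw [norm_sub_rev, Complex.sub_conj, norm_mul, Complex.norm_I, mul_one, Complex.norm_real,
      Real.norm_eq_abs, abs_mul, abs_two]
  rw [hf.stemSnd_eq hi hz, norm_smul, Real.norm_of_nonneg (by norm_num), norm_mul, hi.2, one_mul,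
    ← hdist]
  gcongr
  exact hg _ _ hz' hz

theorem norm_sub_le_of_sliceLipschitz (hω : IsMajorant ω) (hC : 0 ≤ C) {p q : ℍ}
    (hp : ‖p‖ < 1) (hq : ‖q‖ < 1) :
    ‖f p - f q‖ ≤ 4 * C * ω ‖p - q‖ := by
  rcases eq_or_ne p q with rfl | hpq
  · simp [hω.map_zero]
  obtain ⟨Jp, hJp, hp_im⟩ := exists_imaginaryUnit_smul_eq_im p
  obtain ⟨Jq, hJq, hq_im⟩ := exists_imaginaryUnit_smul_eq_im q
  set zp := sliceCoord p
  set zq := sliceCoord q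
  set d := ‖p - q‖
  have hd : d ∈ Set.Ioc 0 2 :=
    ⟨norm_pos_iff.2 (sub_ne_zero.2 hpq), (norm_sub_le p q).trans (by linarith)⟩
  have hzp : ‖zp‖ < 1 := (norm_sliceCoord p).trans_lt hp
  have hzq : ‖zq‖ < 1 := (norm_sliceCoord q).trans_lt hq
  have hωz : ω ‖zp - zq‖ ≤ ω d :=
    hω.mono ⟨norm_nonneg _, (norm_sliceCoord_sub_le p q).trans hd.2⟩ (Set.Ioc_subset_Icc_self hd)
      (norm_sliceCoord_sub_le p q)
  have hsplit : f p - f q = (stemFst a zp - stemFst a zq) + Jp * (stemSnd a zp - stemSnd a zq)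
      + (Jp - Jq) * stemSnd a zq := by
    conv_lhs => rw [← sliceEmb_sliceCoord hJp hp_im, ← sliceEmb_sliceCoord hJq hq_im,
      hf.apply_sliceEmb hJp hzp, hf.apply_sliceEmb hJq hzq]
    noncomm_ring
  have hJ : ‖Jp - Jq‖ ≤ 2 := (norm_sub_le Jp Jq).trans (by rw [hJp.2, hJq.2]; norm_num)
  have hdir : ‖Jp - Jq‖ * ω (2 * |zq.im|) ≤ 4 * ω d := by
    have hq_dist : ‖q.im‖ * ‖Jp - Jq‖ ≤ 2 * d := by
      calc ‖q.im‖ * ‖Jp - Jq‖ ≤ 2 * ‖‖p.im‖ • Jp - ‖q.im‖ • Jq‖ :=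
            mul_norm_sub_le_two_mul_norm_smul_sub hJp.2 hJq.2 (norm_nonneg _) (norm_nonneg _)
        _ ≤ 2 * d := by
            rw [hp_im, hq_im, ← Quaternion.im_sub]; gcongr; exact Quaternion.norm_im_le _
    have hq_im_lt : ‖q.im‖ < 1 := (Quaternion.norm_im_le q).trans_lt hq
    refine hω.mul_le_mul_of_mul_le ⟨by positivity, ?_⟩ hd (norm_nonneg _) (by linarith) ?_
    · simp only [zq, sliceCoord, abs_norm]; linarith
    · simp only [zq, sliceCoord, abs_norm]; linarith
  calc ‖f p - f q‖ ≤ ‖stemFst a zp - stemFst a zq‖ + ‖Jp * (stemSnd a zp - stemSnd a zq)‖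
        + ‖(Jp - Jq) * stemSnd a zq‖ := by
        rw [hsplit]; exact norm_add₃_le
    _ = ‖stemFst a zp - stemFst a zq‖ + ‖stemSnd a zp - stemSnd a zq‖
        + ‖Jp - Jq‖ * ‖stemSnd a zq‖ := by
        rw [norm_mul, norm_mul, hJp.2, one_mul]
    _ ≤ C * ω d + C * ω d + ‖Jp - Jq‖ * (2⁻¹ * (C * ω (2 * |zq.im|))) := by
        gcongr
        · exact (hf.norm_stemFst_sub_le hi hg hzp hzq).trans (by gcongr)
        · exact (hf.norm_stemSnd_sub_le hi hg hzp hzq).trans (by gcongr)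
        · exact hf.norm_stemSnd_le hi hg hzq
    _ ≤ C * ω d + C * ω d + 2⁻¹ * C * (4 * ω d) := by
        have := mul_le_mul_of_nonneg_left hdir (by positivity : (0 : ℝ) ≤ 2⁻¹ * C)
        linarith
    _ = 4 * C * ω d := by ring

end

end SliceRegularOn

theorem stmt1 (ω : ℝ → ℝ) (hω : IsMajorant ω) (i : ℍ) (hi : IsImaginaryUnit i)
    (f : ℍ → ℍ) (hf : IsSliceRegular f)
    (h : ∃ C > 0, ∀ x ∈ sliceDisc i, ∀ y ∈ sliceDisc i,
      ‖f x - f y‖ ≤ C * ω ‖x - y‖) :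
    ∃ L > 0, ∀ p ∈ unitBall, ∀ q ∈ unitBall, ‖f p - f q‖ ≤ L * ω ‖p - q‖ := by
  obtain ⟨C, hC, hCf⟩ := h
  obtain ⟨a, ha⟩ := hf
  have hg (z w : ℂ) (hz : ‖z‖ < 1) (hw : ‖w‖ < 1) :
      ‖f (sliceEmb i hi z) - f (sliceEmb i hi w)‖ ≤ C * ω ‖z - w‖ :=
    norm_sliceEmb_sub hi z w ▸ hCf _ (sliceEmb_mem_sliceDisc hi hz) _ (sliceEmb_mem_sliceDisc hi hw)
  exact ⟨4 * C, by positivity, fun p hp q hq =>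
    ha.norm_sub_le_of_sliceLipschitz hi hg hω hC.le hp hq⟩
end
end

section
/- Let ω be a majorant, let i, j be imaginary units, and let f be a slice regular function on D⁴. If there is C > 0 with ‖f(x) − f(y)‖ ≤ C·ω(‖x − y‖) for all x, y ∈ D_i, then ‖f(x) − f(y)‖ ≤ 2C·ω(‖x − y‖) for all x, y ∈ D_j. -/
/-!
For an imaginary unit `u`, `z ↦ Re z + Im z • u` is an isometric `ℝ`-algebra embedding of `ℂ`
onto the slice `ℂ(u)`, so power series `∑ qⁿ aₙ` commute with it. Since the point of `ℂ(j)`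
corresponding to `z` is `½ (1 - j i)` times that of `ℂ(i)` plus `½ (1 + j i)` times that of `z̄`,
termwise summation gives the representation formula
`f (φⱼ z) = ½ (1 - j i) f (φᵢ z) + ½ (1 + j i) f (φᵢ z̄)`.
A difference of values of `f` on `ℂ(j)` is thus controlled by two differences on `ℂ(i)` taken at
points at the same distance, and `‖j i‖ = 1` yields the factor `2`.
-/

noncomputable section

namespace IsImaginaryUnit

variable {u : ℍ}

theorem normSq_eq_one (hu : IsImaginaryUnit u) : Quaternion.normSq u = 1 := by
  rw [Quaternion.normSq_eq_norm_mul_self, hu.2, mul_one]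

theorem mul_self_s5 (hu : IsImaginaryUnit u) : u * u = -1 := by
  have h := Quaternion.self_mul_star u
  rw [Quaternion.star_eq_neg.mpr hu.1, hu.normSq_eq_one, mul_neg, Quaternion.coe_one] at h
  exact neg_eq_iff_eq_neg.mp h

def sliceEmbedding (hu : IsImaginaryUnit u) : ℂ →ₐ[ℝ] ℍ := Complex.liftAux u hu.mul_self_s5

theorem sliceEmbedding_apply (hu : IsImaginaryUnit u) (z : ℂ) :
    hu.sliceEmbedding z = (z.re : ℍ) + z.im • u := by
  rw [sliceEmbedding, Complex.liftAux_apply, Quaternion.algebraMap_def]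

theorem norm_sliceEmbedding (hu : IsImaginaryUnit u) (z : ℂ) : ‖hu.sliceEmbedding z‖ = ‖z‖ := by
  have h : Quaternion.normSq (hu.sliceEmbedding z) = Complex.normSq z := by
    rw [sliceEmbedding_apply, Quaternion.normSq_add, Quaternion.normSq_smul, hu.normSq_eq_one,
      Quaternion.normSq_coe, Complex.normSq_apply]
    simp only [Quaternion.coe_mul_eq_smul, Quaternion.re_smul, Quaternion.re_star, hu.1,
      smul_eq_mul, mul_zero, mul_one, add_zero]
    ring
  rw [Quaternion.normSq_eq_norm_mul_self, Complex.normSq_eq_norm_sq] at h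
  nlinarith [norm_nonneg (hu.sliceEmbedding z), norm_nonneg z]

theorem sliceDisc_eq_image (hu : IsImaginaryUnit u) :
    sliceDisc u = hu.sliceEmbedding '' Metric.ball 0 1 := by
  ext q
  simp only [sliceDisc, qslice, Set.mem_ofPred_eq, Set.mem_image, Metric.mem_ball, dist_zero_right]
  constructor
  · rintro ⟨⟨x, y, rfl⟩, hq⟩
    refine ⟨⟨x, y⟩, ?_, hu.sliceEmbedding_apply _⟩
    rwa [← hu.norm_sliceEmbedding, hu.sliceEmbedding_apply]
  · rintro ⟨z, hz, rfl⟩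
    exact ⟨⟨z.re, z.im, hu.sliceEmbedding_apply z⟩, by rwa [hu.norm_sliceEmbedding]⟩

theorem sliceEmbedding_mem_unitBall (hu : IsImaginaryUnit u) {z : ℂ} (hz : ‖z‖ < 1) :
    hu.sliceEmbedding z ∈ unitBall := by
  rwa [unitBall, Set.mem_ofPred_eq, hu.norm_sliceEmbedding]

end IsImaginaryUnit

section ReprFormula

variable {A : Type*} [NormedRing A] [NormedAlgebra ℝ A]

/-- `½ (1 - v) a + ½ (1 + v) b`: with `v = j i`, the right-hand side of the representation
formula expressing a slice regular function on `ℂ(j)` through its values on `ℂ(i)`. -/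
def reprFormula (v a b : A) : A := (2⁻¹ : ℝ) • ((a + b) - v * (a - b))

theorem reprFormula_sub_reprFormula (v a₁ b₁ a₂ b₂ : A) :
    reprFormula v a₁ b₁ - reprFormula v a₂ b₂ = reprFormula v (a₁ - a₂) (b₁ - b₂) := by
  simp only [reprFormula, mul_sub]
  module

theorem reprFormula_mul (v a b x : A) :
    reprFormula v a b * x = reprFormula v (a * x) (b * x) := by
  simp only [reprFormula, smul_mul_assoc, sub_mul, add_mul, mul_assoc]

theorem HasSum.reprFormula {ι : Type*} {f g : ι → A} {a b : A} (hf : HasSum f a)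
    (hg : HasSum g b) (v : A) :
    HasSum (fun n => reprFormula v (f n) (g n)) (reprFormula v a b) :=
  ((hf.add hg).sub ((hf.sub hg).mul_left v)).const_smul _

theorem norm_reprFormula_le {v : A} (hv : ‖v‖ ≤ 1) (a b : A) :
    ‖reprFormula v a b‖ ≤ ‖a‖ + ‖b‖ := by
  have hab : ‖a - b‖ ≤ ‖a‖ + ‖b‖ := norm_sub_le a b
  calc ‖reprFormula v a b‖ ≤ 2⁻¹ * (‖a + b‖ + ‖v‖ * ‖a - b‖) := by
        rw [reprFormula, norm_smul, Real.norm_of_nonneg (by norm_num)]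
        gcongr
        exact (norm_sub_le _ _).trans (add_le_add_right (norm_mul_le _ _) _)
    _ ≤ 2⁻¹ * ((‖a‖ + ‖b‖) + 1 * (‖a‖ + ‖b‖)) := by
        gcongr
        exact norm_add_le a b
    _ = ‖a‖ + ‖b‖ := by ring

end ReprFormula

open ComplexConjugate

section Representation

variable {i j : ℍ}

theorem IsImaginaryUnit.sliceEmbedding_eq_reprFormula (hi : IsImaginaryUnit i)
    (hj : IsImaginaryUnit j) (z : ℂ) :
    hj.sliceEmbedding z =
      reprFormula (j * i) (hi.sliceEmbedding z) (hi.sliceEmbedding (conj z)) := by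
  have hdiff : hi.sliceEmbedding z - hi.sliceEmbedding (conj z) = (2 * z.im) • i := by
    simp only [IsImaginaryUnit.sliceEmbedding_apply, Complex.conj_re, Complex.conj_im]
    module
  rw [reprFormula, hdiff, mul_smul_comm, mul_assoc, hi.mul_self_s5, mul_neg_one]
  simp only [IsImaginaryUnit.sliceEmbedding_apply, Complex.conj_re, Complex.conj_im]
  module

theorem SliceRegularOn.apply_sliceEmbedding {f : ℍ → ℍ} {a : ℕ → ℍ} (hf : SliceRegularOn f a)
    (hi : IsImaginaryUnit i) (hj : IsImaginaryUnit j) {z : ℂ} (hz : ‖z‖ < 1) :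
    f (hj.sliceEmbedding z) =
      reprFormula (j * i) (f (hi.sliceEmbedding z)) (f (hi.sliceEmbedding (conj z))) := by
  refine (hf.2 _ (hj.sliceEmbedding_mem_unitBall hz)).unique ?_
  convert (hf.2 _ (hi.sliceEmbedding_mem_unitBall hz)).reprFormula
    (hf.2 _ (hi.sliceEmbedding_mem_unitBall (by rwa [Complex.norm_conj]))) (j * i) using 2 with n
  rw [← map_pow, ← map_pow, ← map_pow, ← map_pow, hi.sliceEmbedding_eq_reprFormula hj,
    reprFormula_mul]

end Representation

theorem stmt5_general (ω : ℝ → ℝ)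
    (i j : ℍ) (hi : IsImaginaryUnit i) (hj : IsImaginaryUnit j)
    (f : ℍ → ℍ) (hf : IsSliceRegular f) (C : ℝ)
    (h : ∀ x ∈ sliceDisc i, ∀ y ∈ sliceDisc i, ‖f x - f y‖ ≤ C * ω ‖x - y‖) :
    ∀ x ∈ sliceDisc j, ∀ y ∈ sliceDisc j, ‖f x - f y‖ ≤ 2 * C * ω ‖x - y‖ := by
  obtain ⟨a, hfa⟩ := hf
  simp only [hi.sliceDisc_eq_image, hj.sliceDisc_eq_image, Set.forall_mem_image, ← map_sub,
    hi.norm_sliceEmbedding, hj.norm_sliceEmbedding, Metric.mem_ball, dist_zero_right] at h ⊢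
  intro z hz w hw
  have hji : ‖j * i‖ ≤ 1 := by rw [norm_mul, hi.2, hj.2, mul_one]
  calc ‖f (hj.sliceEmbedding z) - f (hj.sliceEmbedding w)‖
      ≤ ‖f (hi.sliceEmbedding z) - f (hi.sliceEmbedding w)‖ +
          ‖f (hi.sliceEmbedding (conj z)) - f (hi.sliceEmbedding (conj w))‖ := by
        rw [hfa.apply_sliceEmbedding hi hj hz, hfa.apply_sliceEmbedding hi hj hw,
          reprFormula_sub_reprFormula]
        exact norm_reprFormula_le hji _ _
    _ ≤ C * ω ‖z - w‖ + C * ω ‖z - w‖ := by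
        gcongr
        · exact h hz hw
        · rw [← Complex.norm_conj (z - w), map_sub]
          exact h (by rwa [Complex.norm_conj]) (by rwa [Complex.norm_conj])
    _ = 2 * C * ω ‖z - w‖ := by ring

theorem stmt5 (ω : ℝ → ℝ) (hω : IsMajorant ω)
    (i j : ℍ) (hi : IsImaginaryUnit i) (hj : IsImaginaryUnit j)
    (f : ℍ → ℍ) (hf : IsSliceRegular f) (C : ℝ) (hC : 0 < C)
    (h : ∀ x ∈ sliceDisc i, ∀ y ∈ sliceDisc i, ‖f x - f y‖ ≤ C * ω ‖x - y‖) :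
    ∀ x ∈ sliceDisc j, ∀ y ∈ sliceDisc j, ‖f x - f y‖ ≤ 2 * C * ω ‖x - y‖ :=
  stmt5_general ω i j hi hj f hf C h
end
end

section
/- Let ω be a regular majorant, i an imaginary unit, and f a slice regular function on D⁴ that is continuous on the closed unit ball of ℍ. Assume there is C₀ > 0 with | ‖f(x)‖ − ‖f(y)‖ | ≤ C₀·ω(‖x − y‖) for all x, y ∈ S_i, and there is C₁ > 0 with ‖f(x) − f(y)‖ ≤ C₁·ω(‖x − y‖) for all x, y ∈ D_i. Then there exists C > 0 such that for each sign s ∈ {+1, −1} and every q ∈ D⁴ (with q₀ = Re q and 𝐪 = q − Re q) satisfying Re(q·conj(e^{it})) ≤ q₀·cos t + s·‖𝐪‖·sin t for all t ∈ [0, 2π], one has P_i[z ↦ ‖f(z)‖](q) − 2·‖f(q₀ + s·‖𝐪‖·i)‖ ≤ C·ω(1 − ‖q‖). -/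
noncomputable section

/-!
The sign condition, tested at `t = π/2` and `t = 3π/2`, forces `q = q₀ + s‖𝐪‖ i`, so
`q = r e^{iθ}` lies in the slice `ℂ(i)` and `P_i` is the classical Poisson integral of the disc.
The Poisson kernel `P_r` has mass one (Poisson's formula for a constant), hence
`P_i[‖f‖](q) - ‖f(e^{iθ})‖ ≤ C₀ (2π)⁻¹ ∫ ω(|e^{iu} - 1|) P_r(u) du`. Splitting at `|u| = 1 - r` and
using `P_r ≤ 2/(1 - r)` near `0`, `P_r ≤ 2π²(1 - r)/u²` away from it, the regularity of `ω` bounds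
this integral by a multiple of `ω(1 - r)`. Finally `‖f(e^{iθ})‖ ≤ ‖f(q)‖ + C₁ ω(1 - r)`, since the
bound on `D_i` passes to the boundary along the radius by continuity of `f`.
-/

open Real Topology

open scoped RealInnerProductSpace

/-- The length `|e^{iu} - 1|` of the chord subtending the angle `u`. -/
def chord (u : ℝ) : ℝ := √(2 - 2 * cos u)

lemma chord_neg (u : ℝ) : chord (-u) = chord u := by simp [chord]

lemma continuous_chord : Continuous chord := by unfold chord; fun_prop

lemma chord_mem_Icc (u : ℝ) : chord u ∈ Set.Icc (0 : ℝ) 2 := by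
  refine ⟨Real.sqrt_nonneg _, Real.sqrt_le_iff.mpr ⟨zero_le_two, ?_⟩⟩
  linarith [neg_one_le_cos u]

lemma chord_le_abs (u : ℝ) : chord u ≤ |u| := by
  rw [chord, ← Real.sqrt_sq_eq_abs]
  exact Real.sqrt_le_sqrt (by linarith [one_sub_sq_div_two_le_cos (x := u)])

lemma continuous_expI (i : ℍ) : Continuous (expI i) :=
  (Quaternion.continuous_coe.comp continuous_cos).add (continuous_sin.smul continuous_const)

lemma expI_periodic (i : ℍ) : Function.Periodic (expI i) (2 * π) := fun t ↦ by
  simp only [expI, cos_add_two_pi, sin_add_two_pi]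

lemma expI_pi_div_two (i : ℍ) : expI i (π / 2) = i := by simp [expI]

lemma expI_pi_div_two_add_pi (i : ℍ) : expI i (π / 2 + π) = -i := by simp [expI]

lemma inner_eq_of_forall_re_mul_star_expI_le {i q : ℍ} {c : ℝ}
    (h : ∀ t ∈ Set.Icc (0 : ℝ) (2 * π), (q * star (expI i t)).re ≤ q.re * cos t + c * sin t) :
    ⟪q, i⟫ = c := by
  have h₁ := h (π / 2) ⟨by positivity, by linarith [pi_pos]⟩
  have h₂ := h (π / 2 + π) ⟨by positivity, by linarith [pi_pos]⟩
  rw [expI_pi_div_two, cos_pi_div_two, sin_pi_div_two] at h₁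
  rw [expI_pi_div_two_add_pi, cos_add_pi, sin_add_pi, cos_pi_div_two, sin_pi_div_two, star_neg,
    mul_neg, Quaternion.re_neg] at h₂
  rw [Quaternion.inner_def]
  linarith

namespace IsImaginaryUnit

variable {i : ℍ}

lemma inner_ofReal (hi : IsImaginaryUnit i) (x : ℝ) : ⟪(x : ℍ), i⟫ = 0 := by
  simp [Quaternion.inner_def, Quaternion.coe_mul_eq_smul, hi.1]

lemma norm_ofReal_add_smul_sq (hi : IsImaginaryUnit i) (x y : ℝ) :
    ‖(x : ℍ) + y • i‖ ^ 2 = x ^ 2 + y ^ 2 := by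
  rw [norm_add_sq_real, real_inner_smul_right, hi.inner_ofReal, norm_smul, hi.2]
  simp [sq_abs]

lemma norm_expI (hi : IsImaginaryUnit i) (t : ℝ) : ‖expI i t‖ = 1 := by
  rw [← Real.sqrt_sq (norm_nonneg _), expI, hi.norm_ofReal_add_smul_sq, cos_sq_add_sin_sq,
    Real.sqrt_one]

lemma expI_mem_sliceCircle (hi : IsImaginaryUnit i) (t : ℝ) : expI i t ∈ sliceCircle i :=
  ⟨⟨cos t, sin t, rfl⟩, hi.norm_expI t⟩

lemma smul_expI_mem_sliceDisc (hi : IsImaginaryUnit i) {ρ : ℝ} (hρ : |ρ| < 1) (θ : ℝ) :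
    ρ • expI i θ ∈ sliceDisc i := by
  refine ⟨⟨ρ * cos θ, ρ * sin θ, ?_⟩, ?_⟩
  · rw [expI, smul_add, smul_smul, Quaternion.smul_coe]
  · rwa [norm_smul, hi.norm_expI, mul_one, norm_eq_abs]

lemma norm_smul_expI_sub_expI_sq (hi : IsImaginaryUnit i) (r θ t : ℝ) :
    ‖r • expI i θ - expI i t‖ ^ 2 = (1 - r) ^ 2 + r * (2 - 2 * cos (t - θ)) := by
  have h : r • expI i θ - expI i t = ((r * cos θ - cos t : ℝ) : ℍ) + (r * sin θ - sin t) • i := by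
    simp only [expI, smul_add, smul_smul, Quaternion.coe_sub, Quaternion.coe_mul, sub_smul,
      Quaternion.coe_mul_eq_smul]
    abel
  rw [h, hi.norm_ofReal_add_smul_sq, cos_sub]
  linear_combination r ^ 2 * sin_sq_add_cos_sq θ + sin_sq_add_cos_sq t

lemma norm_expI_sub_expI (hi : IsImaginaryUnit i) (t θ : ℝ) :
    ‖expI i t - expI i θ‖ = chord (t - θ) := by
  have h := hi.norm_smul_expI_sub_expI_sq 1 t θ
  rw [one_smul, ← cos_neg, neg_sub] at h
  rw [← Real.sqrt_sq (norm_nonneg _), h, chord]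
  ring_nf

lemma exists_eq_norm_smul_expI (hi : IsImaginaryUnit i) (x y : ℝ) :
    ∃ θ, (x : ℍ) + y • i = ‖(x : ℍ) + y • i‖ • expI i θ := by
  let z : ℂ := ⟨x, y⟩
  have hz : ‖(x : ℍ) + y • i‖ = ‖z‖ := by
    rw [← Real.sqrt_sq (norm_nonneg _), hi.norm_ofReal_add_smul_sq, Complex.norm_def,
      Complex.normSq_mk]
    ring_nf
  refine ⟨z.arg, ?_⟩
  rw [hz, expI, smul_add, smul_smul, Quaternion.smul_coe, Complex.norm_mul_cos_arg,
    Complex.norm_mul_sin_arg]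

/-- Equality in Cauchy–Schwarz for `⟪q - q₀, s • i⟫`. -/
lemma eq_re_add_smul_of_inner_eq (hi : IsImaginaryUnit i) {s : ℝ} (hs : |s| = 1) {q : ℍ}
    (h : ⟪q, i⟫ = s * ‖q - (q.re : ℍ)‖) : q = (q.re : ℍ) + (s * ‖q - (q.re : ℍ)‖) • i := by
  set a := q - (q.re : ℍ)
  have hsi : ‖s • i‖ = 1 := by rw [norm_smul, hi.2, Real.norm_eq_abs, hs, one_mul]
  have ha : ⟪a, s • i⟫ = ‖a‖ * ‖s • i‖ := by
    rw [real_inner_smul_right, inner_sub_left, hi.inner_ofReal, h, hsi, sub_zero, ← mul_assoc,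
      ← sq, ← sq_abs, hs]
    ring
  have := inner_eq_norm_mul_iff_real.mp ha
  rw [hsi, one_smul, smul_smul] at this
  rw [mul_comm, ← this, add_sub_cancel]

end IsImaginaryUnit

/-- The Poisson kernel of the unit disc at the point `r`, evaluated at the boundary point `e^{iu}`:
the denominator is `|e^{iu} - r|²`. -/
def circlePoissonKernel (r u : ℝ) : ℝ := (1 - r ^ 2) / ((1 - r) ^ 2 + r * (2 - 2 * cos u))

section circlePoissonKernel

variable {r : ℝ}

lemma two_sub_two_cos_nonneg (u : ℝ) : 0 ≤ 2 - 2 * cos u := by linarith [cos_le_one u]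

lemma circlePoissonKernel_denom_pos (hr0 : 0 ≤ r) (hr1 : r < 1) (u : ℝ) :
    0 < (1 - r) ^ 2 + r * (2 - 2 * cos u) := by
  have := two_sub_two_cos_nonneg u
  have : 0 < 1 - r := by linarith
  positivity

lemma circlePoissonKernel_nonneg (hr0 : 0 ≤ r) (hr1 : r < 1) (u : ℝ) :
    0 ≤ circlePoissonKernel r u :=
  div_nonneg (by nlinarith) (circlePoissonKernel_denom_pos hr0 hr1 u).le

lemma continuous_circlePoissonKernel (hr0 : 0 ≤ r) (hr1 : r < 1) :
    Continuous (circlePoissonKernel r) :=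
  continuous_const.div (by fun_prop) fun u ↦ (circlePoissonKernel_denom_pos hr0 hr1 u).ne'

lemma circlePoissonKernel_periodic (r : ℝ) : Function.Periodic (circlePoissonKernel r) (2 * π) :=
  fun u ↦ by simp [circlePoissonKernel]

lemma circlePoissonKernel_neg (r u : ℝ) : circlePoissonKernel r (-u) = circlePoissonKernel r u := by
  simp [circlePoissonKernel]

lemma circlePoissonKernel_le_two_div (hr0 : 0 ≤ r) (hr1 : r < 1) (u : ℝ) :
    circlePoissonKernel r u ≤ 2 / (1 - r) := by
  have := two_sub_two_cos_nonneg u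
  rw [circlePoissonKernel, div_le_div_iff₀ (circlePoissonKernel_denom_pos hr0 hr1 u) (by linarith)]
  nlinarith [mul_nonneg hr0 this, sq_nonneg (1 - r)]

lemma circlePoissonKernel_le_div_sq (hr0 : 0 ≤ r) (hr1 : r < 1) {u : ℝ} (hu : |u| ≤ π)
    (hu0 : u ≠ 0) : circlePoissonKernel r u ≤ 2 * π ^ 2 * (1 - r) / u ^ 2 := by
  have hcos := cos_le_one_sub_mul_cos_sq hu
  have hchord : 4 * u ^ 2 ≤ π ^ 2 * (2 - 2 * cos u) := by
    have : 2 / π ^ 2 * u ^ 2 * π ^ 2 = 2 * u ^ 2 := by field_simp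
    nlinarith [sq_nonneg π]
  -- `(1 - r)² + r b ≥ b / 4` for `b ∈ [0, 4]`, being affine in `b` and true at both ends
  have hdenom : 2 - 2 * cos u ≤ 4 * ((1 - r) ^ 2 + r * (2 - 2 * cos u)) := by
    nlinarith [two_sub_two_cos_nonneg u, neg_one_le_cos u,
      mul_nonneg (two_sub_two_cos_nonneg u) (by nlinarith : 0 ≤ r ^ 2 + 2 * r),
      mul_nonneg (by linarith [neg_one_le_cos u] : 0 ≤ 2 + 2 * cos u) (sq_nonneg (1 - r))]
  have hden := circlePoissonKernel_denom_pos hr0 hr1 u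
  rw [circlePoissonKernel, div_le_div_iff₀ hden (by positivity)]
  have h1r : 0 ≤ 1 - r ^ 2 := by nlinarith
  nlinarith [mul_le_mul_of_nonneg_left hdenom (mul_nonneg h1r (sq_nonneg π)),
    mul_le_mul_of_nonneg_left hchord h1r,
    mul_nonneg (mul_nonneg (by linarith : 0 ≤ 1 - r) (by linarith : 0 ≤ 1 - r))
      (mul_nonneg (sq_nonneg π) hden.le)]

open InnerProductSpace in
lemma integral_circlePoissonKernel (hr0 : 0 ≤ r) (hr1 : r < 1) :
    ∫ u in -π..π, circlePoissonKernel r u = 2 * π := by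
  have h := HarmonicContOnCl.circleAverage_poissonKernel_smul (f := fun _ : ℂ ↦ (1 : ℝ)) (c := 0)
    (w := (r : ℂ)) (R := 1) harmonicContOnCl_const (by simp [abs_of_nonneg hr0, hr1])
  have hK : ∀ θ : ℝ, (poissonKernel 0 (r : ℂ) • fun _ : ℂ ↦ (1 : ℝ)) (circleMap 0 1 θ) =
      circlePoissonKernel r θ := by
    intro θ
    simp only [circleMap, Complex.ofReal_one, one_mul, zero_add, Pi.smul_apply', poissonKernel,
      sub_zero, Complex.norm_exp_ofReal_mul_I, one_pow, Complex.norm_real, norm_eq_abs, sq_abs,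
      Complex.sq_norm, Complex.normSq_apply, Complex.sub_re, Complex.exp_ofReal_mul_I_re,
      Complex.ofReal_re, Complex.sub_im, Complex.exp_ofReal_mul_I_im, Complex.ofReal_im,
      smul_eq_mul, mul_one, circlePoissonKernel]
    congr 1
    linear_combination sin_sq_add_cos_sq θ
  simp_rw [Real.circleAverage_def, hK, smul_eq_mul] at h
  have := (circlePoissonKernel_periodic r).intervalIntegral_add_eq (-π) 0
  rw [show -π + 2 * π = π by ring, zero_add] at this
  rw [this]
  field_simp at h
  linarith

end circlePoissonKernel

namespace IsMajorant

variable {ω : ℝ → ℝ} {r : ℝ}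

lemma mul_apply_le_mul_apply (hω : IsMajorant ω) {x y : ℝ} (hx : 0 < x) (hxy : x ≤ y) (hy : y ≤ 2) :
    x * ω y ≤ y * ω x := by
  have := hω.div_anti ⟨hx, hxy.trans hy⟩ ⟨hx.trans_le hxy, hy⟩ hxy
  rwa [div_le_div_iff₀ (hx.trans_le hxy) hx, mul_comm, mul_comm (ω x)] at this

lemma continuous_comp_chord (hω : IsMajorant ω) : Continuous fun u ↦ ω (chord u) :=
  hω.contOn.comp_continuous continuous_chord chord_mem_Icc

lemma comp_chord_le (hω : IsMajorant ω) {u : ℝ} (hu : |u| ≤ 2) : ω (chord u) ≤ ω |u| :=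
  hω.mono (chord_mem_Icc u) ⟨abs_nonneg u, hu⟩ (chord_le_abs u)

lemma continuous_comp_chord_mul_circlePoissonKernel (hω : IsMajorant ω) (hr0 : 0 ≤ r)
    (hr1 : r < 1) : Continuous fun u ↦ ω (chord u) * circlePoissonKernel r u :=
  hω.continuous_comp_chord.mul (continuous_circlePoissonKernel hr0 hr1)

lemma integral_comp_chord_mul_circlePoissonKernel_near_le (hω : IsMajorant ω) (hr0 : 0 ≤ r)
    (hr1 : r < 1) :
    ∫ u in -(1 - r)..(1 - r), ω (chord u) * circlePoissonKernel r u ≤ 4 * ω (1 - r) := by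
  have hδ : 0 < 1 - r := by linarith
  have hbound : ∀ u ∈ Set.Icc (-(1 - r)) (1 - r),
      ω (chord u) * circlePoissonKernel r u ≤ ω (1 - r) * (2 / (1 - r)) := by
    intro u hu
    have hu' : |u| ≤ 1 - r := abs_le.mpr hu
    exact mul_le_mul ((hω.comp_chord_le (by linarith)).trans
      (hω.mono ⟨abs_nonneg u, by linarith⟩ ⟨hδ.le, by linarith⟩ hu'))
      (circlePoissonKernel_le_two_div hr0 hr1 u) (circlePoissonKernel_nonneg hr0 hr1 u)
      (hω.nonneg _ ⟨hδ.le, by linarith⟩)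
  calc ∫ u in -(1 - r)..(1 - r), ω (chord u) * circlePoissonKernel r u
      ≤ ∫ _ in -(1 - r)..(1 - r), ω (1 - r) * (2 / (1 - r)) :=
        intervalIntegral.integral_mono_on (by linarith)
          ((hω.continuous_comp_chord_mul_circlePoissonKernel hr0 hr1).intervalIntegrable _ _)
          intervalIntegrable_const hbound
    _ = 4 * ω (1 - r) := by
        rw [intervalIntegral.integral_const, smul_eq_mul]
        field_simp
        ring

lemma integral_comp_chord_mul_circlePoissonKernel_mid_le (hω : IsMajorant ω)
    (hr0 : 0 ≤ r) (hr1 : r < 1) :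
    ∫ u in (1 - r)..2, ω (chord u) * circlePoissonKernel r u ≤
      2 * π ^ 2 * ((1 - r) * ∫ t in (1 - r)..2, ω t / t ^ 2) := by
  have hδ : 0 < 1 - r := by linarith
  have hω_div_sq : IntervalIntegrable (fun t ↦ ω t / t ^ 2) MeasureTheory.volume (1 - r) 2 := by
    refine ContinuousOn.intervalIntegrable ?_
    rw [Set.uIcc_of_le (by linarith)]
    refine (hω.contOn.mono (Set.Icc_subset_Icc hδ.le le_rfl)).div (by fun_prop) fun t ht ↦ ?_
    have : 0 < t := hδ.trans_le ht.1
    positivity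
  rw [← intervalIntegral.integral_const_mul, ← intervalIntegral.integral_const_mul]
  refine intervalIntegral.integral_mono_on (by linarith)
    ((hω.continuous_comp_chord_mul_circlePoissonKernel hr0 hr1).intervalIntegrable _ _)
    ((hω_div_sq.const_mul _).const_mul _) fun u hu ↦ ?_
  have hu0 : 0 < u := hδ.trans_le hu.1
  have hωu := hω.comp_chord_le (u := u) (by rw [abs_of_pos hu0]; exact hu.2)
  rw [abs_of_pos hu0] at hωu
  calc ω (chord u) * circlePoissonKernel r u
      ≤ ω u * (2 * π ^ 2 * (1 - r) / u ^ 2) :=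
        mul_le_mul hωu (circlePoissonKernel_le_div_sq hr0 hr1
          (by rw [abs_of_pos hu0]; linarith [hu.2, pi_gt_three]) hu0.ne')
          (circlePoissonKernel_nonneg hr0 hr1 u) (hω.nonneg u ⟨hu0.le, hu.2⟩)
    _ = 2 * π ^ 2 * ((1 - r) * (ω u / u ^ 2)) := by ring

lemma integral_comp_chord_mul_circlePoissonKernel_far_le (hω : IsMajorant ω) (hr0 : 0 ≤ r)
    (hr1 : r < 1) :
    ∫ u in (2 : ℝ)..π, ω (chord u) * circlePoissonKernel r u ≤ 2 * π ^ 2 * ω (1 - r) := by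
  have hπ := pi_gt_three
  have hδ : 0 < 1 - r := by linarith
  have hω2 : 0 ≤ ω 2 := hω.nonneg 2 ⟨zero_le_two, le_rfl⟩
  calc ∫ u in (2 : ℝ)..π, ω (chord u) * circlePoissonKernel r u
      ≤ ∫ _ in (2 : ℝ)..π, ω 2 * (π ^ 2 * (1 - r) / 2) := by
        refine intervalIntegral.integral_mono_on (by linarith)
          ((hω.continuous_comp_chord_mul_circlePoissonKernel hr0 hr1).intervalIntegrable _ _)
          intervalIntegrable_const fun u hu ↦ ?_
        have hK := circlePoissonKernel_le_div_sq hr0 hr1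
          (abs_le.mpr ⟨by linarith [hu.1], hu.2⟩) (by linarith [hu.1] : u ≠ 0)
        have hK2 : 2 * π ^ 2 * (1 - r) / u ^ 2 ≤ π ^ 2 * (1 - r) / 2 := by
          rw [div_le_div_iff₀ (by nlinarith [hu.1]) two_pos]
          nlinarith [mul_le_mul_of_nonneg_left (by nlinarith [hu.1] : 4 ≤ u ^ 2)
            (mul_pos (sq_pos_of_pos pi_pos) hδ).le]
        exact mul_le_mul (hω.mono (chord_mem_Icc u) ⟨zero_le_two, le_rfl⟩ (chord_mem_Icc u).2)
          (hK.trans hK2) (circlePoissonKernel_nonneg hr0 hr1 u) hω2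
    _ = (π - 2) / 2 * π ^ 2 * ((1 - r) * ω 2) := by
        rw [intervalIntegral.integral_const, smul_eq_mul]
        ring
    _ ≤ 1 * π ^ 2 * (2 * ω (1 - r)) :=
        mul_le_mul (mul_le_mul_of_nonneg_right (by linarith [pi_lt_four]) (sq_nonneg π))
          (hω.mul_apply_le_mul_apply hδ (by linarith) le_rfl) (mul_nonneg hδ.le hω2) (by positivity)
    _ = 2 * π ^ 2 * ω (1 - r) := by ring

end IsMajorant

namespace IsRegularMajorant

variable {ω : ℝ → ℝ}

lemma exists_mul_integral_div_sq_le (hω : IsRegularMajorant ω) :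
    ∃ C > 0, ∀ x, 0 < x → x < 2 → x * ∫ t in x..2, ω t / t ^ 2 ≤ C * ω x := by
  obtain ⟨hmaj, C, hC, hreg⟩ := hω
  refine ⟨C, hC, fun x hx hx2 ↦ ?_⟩
  have : 0 ≤ ∫ t in (0 : ℝ)..x, ω t / t := intervalIntegral.integral_nonneg hx.le
    fun t ht ↦ div_nonneg (hmaj.nonneg t ⟨ht.1, by linarith [ht.2]⟩) ht.1
  linarith [hreg x hx hx2]

lemma exists_integral_comp_chord_mul_circlePoissonKernel_le (hω : IsRegularMajorant ω) :
    ∃ K > 0, ∀ r, 0 ≤ r → r < 1 →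
      ∫ u in -π..π, ω (chord u) * circlePoissonKernel r u ≤ K * ω (1 - r) := by
  obtain ⟨C, hC, hreg⟩ := hω.exists_mul_integral_div_sq_le
  refine ⟨4 + 4 * π ^ 2 * (C + 1), by positivity, fun r hr0 hr1 ↦ ?_⟩
  set g := fun u ↦ ω (chord u) * circlePoissonKernel r u
  have hg : Continuous g := hω.1.continuous_comp_chord_mul_circlePoissonKernel hr0 hr1
  have hsymm : ∫ u in -π..-(1 - r), g u = ∫ u in (1 - r)..π, g u := by
    rw [← intervalIntegral.integral_comp_neg]
    simp only [g, chord_neg, circlePoissonKernel_neg]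
  have hnear := hω.1.integral_comp_chord_mul_circlePoissonKernel_near_le hr0 hr1
  have hmid := hω.1.integral_comp_chord_mul_circlePoissonKernel_mid_le hr0 hr1
  have hfar := hω.1.integral_comp_chord_mul_circlePoissonKernel_far_le hr0 hr1
  have hC' := hreg (1 - r) (by linarith) (by linarith)
  rw [← intervalIntegral.integral_add_adjacent_intervals (b := 1 - r) (hg.intervalIntegrable _ _)
    (hg.intervalIntegrable _ _), ← intervalIntegral.integral_add_adjacent_intervals (b := -(1 - r))
    (hg.intervalIntegrable _ _) (hg.intervalIntegrable _ _), hsymm,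
    ← intervalIntegral.integral_add_adjacent_intervals (b := 2) (hg.intervalIntegrable _ _)
    (hg.intervalIntegrable _ _)]
  nlinarith [sq_nonneg π]

end IsRegularMajorant

lemma Function.Periodic.intervalIntegral_zero_two_pi_eq {g : ℝ → ℝ}
    (hg : Function.Periodic g (2 * π)) (θ : ℝ) :
    ∫ t in (0 : ℝ)..2 * π, g t = ∫ v in -π..π, g (v + θ) := by
  rw [intervalIntegral.integral_comp_add_right, show π + θ = -π + θ + 2 * π by ring,
    hg.intervalIntegral_add_eq (-π + θ) 0, zero_add]

namespace IsImaginaryUnit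

variable {i : ℍ} {ω : ℝ → ℝ} {r : ℝ}

lemma poisson_smul_expI (hi : IsImaginaryUnit i) (hr0 : 0 ≤ r) (u : ℍ → ℝ) (θ : ℝ) :
    poisson i u (r • expI i θ) =
      (2 * π)⁻¹ * ∫ v in -π..π, u (expI i (v + θ)) * circlePoissonKernel r v := by
  have hnorm : ‖r • expI i θ‖ = r := by
    rw [norm_smul, hi.norm_expI, mul_one, norm_eq_abs, abs_of_nonneg hr0]
  have hintegrand : ∀ t, u (expI i t) * (1 - ‖r • expI i θ‖ ^ 2) / ‖r • expI i θ - expI i t‖ ^ 2 =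
      u (expI i t) * circlePoissonKernel r (t - θ) := fun t ↦ by
    rw [hnorm, hi.norm_smul_expI_sub_expI_sq, mul_div_assoc, circlePoissonKernel]
  have hper : Function.Periodic (fun t ↦ u (expI i t) * circlePoissonKernel r (t - θ)) (2 * π) :=
    fun t ↦ by simp only [expI_periodic i t, add_sub_right_comm, circlePoissonKernel_periodic r _]
  simp only [poisson, one_div, hintegrand, hper.intervalIntegral_zero_two_pi_eq θ,
    add_sub_cancel_right]

lemma poisson_smul_expI_le (hi : IsImaginaryUnit i) (hω : IsMajorant ω) {K : ℝ}
    (hK : ∫ u in -π..π, ω (chord u) * circlePoissonKernel r u ≤ K * ω (1 - r))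
    {u : ℍ → ℝ} (hu : ContinuousOn u (sliceCircle i)) {C₀ : ℝ} (hC₀ : 0 ≤ C₀)
    (hmod : ∀ x ∈ sliceCircle i, ∀ y ∈ sliceCircle i, |u x - u y| ≤ C₀ * ω ‖x - y‖)
    (hr0 : 0 ≤ r) (hr1 : r < 1) (θ : ℝ) :
    poisson i u (r • expI i θ) ≤ u (expI i θ) + (2 * π)⁻¹ * C₀ * K * ω (1 - r) := by
  have hU : Continuous fun v ↦ u (expI i (v + θ)) :=
    hu.comp_continuous ((continuous_expI i).comp (continuous_add_const θ))
      fun v ↦ hi.expI_mem_sliceCircle _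
  have hKc := continuous_circlePoissonKernel hr0 hr1
  have hpt : ∀ v ∈ Set.Icc (-π) π, u (expI i (v + θ)) * circlePoissonKernel r v ≤
      u (expI i θ) * circlePoissonKernel r v + C₀ * (ω (chord v) * circlePoissonKernel r v) :=
    fun v _ ↦ by
      have h := (abs_le.mp (hmod _ (hi.expI_mem_sliceCircle (v + θ)) _
        (hi.expI_mem_sliceCircle θ))).2
      rw [hi.norm_expI_sub_expI, add_sub_cancel_right] at h
      nlinarith [circlePoissonKernel_nonneg hr0 hr1 v]
  have hA : IntervalIntegrable (fun v ↦ u (expI i θ) * circlePoissonKernel r v)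
      MeasureTheory.volume (-π) π := (continuous_const.mul hKc).intervalIntegrable _ _
  have hB : IntervalIntegrable (fun v ↦ C₀ * (ω (chord v) * circlePoissonKernel r v))
      MeasureTheory.volume (-π) π :=
    ((hω.continuous_comp_chord_mul_circlePoissonKernel hr0 hr1).const_mul C₀).intervalIntegrable
      _ _
  -- the kernel has mass `2π`, so `u (expI i θ)` is its own Poisson integral
  have hint : ∫ v in -π..π, u (expI i (v + θ)) * circlePoissonKernel r v ≤
      u (expI i θ) * (2 * π) + C₀ * ∫ v in -π..π, ω (chord v) * circlePoissonKernel r v := by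
    rw [← integral_circlePoissonKernel hr0 hr1, ← intervalIntegral.integral_const_mul,
      ← intervalIntegral.integral_const_mul, ← intervalIntegral.integral_add hA hB]
    exact intervalIntegral.integral_mono_on (by linarith [pi_pos])
      ((hU.mul hKc).intervalIntegrable _ _) (hA.add hB) hpt
  rw [hi.poisson_smul_expI hr0]
  calc (2 * π)⁻¹ * ∫ v in -π..π, u (expI i (v + θ)) * circlePoissonKernel r v
      ≤ (2 * π)⁻¹ * (u (expI i θ) * (2 * π) + C₀ * (K * ω (1 - r))) := by
        gcongr
        exact hint.trans (by gcongr)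
    _ = u (expI i θ) + (2 * π)⁻¹ * C₀ * K * ω (1 - r) := by
        field_simp

lemma norm_apply_expI_sub_apply_smul_expI_le (hi : IsImaginaryUnit i) (hω : IsMajorant ω)
    {f : ℍ → ℍ} (hf : ContinuousOn f (Metric.closedBall 0 1)) {C₁ : ℝ} (hC₁ : 0 ≤ C₁)
    (hlip : ∀ x ∈ sliceDisc i, ∀ y ∈ sliceDisc i, ‖f x - f y‖ ≤ C₁ * ω ‖x - y‖)
    (hr0 : 0 ≤ r) (hr1 : r < 1) (θ : ℝ) :
    ‖f (expI i θ) - f (r • expI i θ)‖ ≤ C₁ * ω (1 - r) := by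
  have hmem : ∀ ρ : ℝ, 0 ≤ ρ → ρ ≤ 1 → ρ • expI i θ ∈ Metric.closedBall (0 : ℍ) 1 :=
    fun ρ h0 h1 ↦ by
      rwa [mem_closedBall_zero_iff, norm_smul, hi.norm_expI, mul_one, norm_eq_abs,
        abs_of_nonneg h0]
  have hlim : Filter.Tendsto (fun ρ : ℝ ↦ ρ • expI i θ) (𝓝[<] 1)
      (𝓝[Metric.closedBall 0 1] (expI i θ)) := by
    refine tendsto_nhdsWithin_of_tendsto_nhds_of_eventually_within _ ?_ ?_
    · simpa using (Continuous.tendsto (f := fun ρ : ℝ ↦ ρ • expI i θ) (by fun_prop) 1).mono_left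
        nhdsWithin_le_nhds
    · filter_upwards [Ioo_mem_nhdsLT hr1] with ρ hρ using hmem ρ (by linarith [hρ.1]) hρ.2.le
  refine le_of_tendsto
    (((hf _ (by simpa using hmem 1 zero_le_one le_rfl)).tendsto.comp hlim).sub_const _).norm ?_
  filter_upwards [Ioo_mem_nhdsLT hr1] with ρ hρ
  have hdist : ‖ρ • expI i θ - r • expI i θ‖ = ρ - r := by
    rw [← sub_smul, norm_smul, hi.norm_expI, mul_one, norm_eq_abs, abs_of_pos (by linarith [hρ.1])]
  calc ‖f (ρ • expI i θ) - f (r • expI i θ)‖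
      ≤ C₁ * ω (ρ - r) := by
        rw [← hdist]
        exact hlip _ (hi.smul_expI_mem_sliceDisc (abs_lt.mpr ⟨by linarith [hρ.1], hρ.2⟩) θ)
          _ (hi.smul_expI_mem_sliceDisc (abs_lt.mpr ⟨by linarith, hr1⟩) θ)
    _ ≤ C₁ * ω (1 - r) := by
        gcongr
        exact hω.mono ⟨by linarith [hρ.1], by linarith [hρ.2]⟩ ⟨by linarith, by linarith⟩
          (by linarith [hρ.2])

end IsImaginaryUnit

theorem stmt19_general (ω : ℝ → ℝ) (hω : IsRegularMajorant ω) (i : ℍ) (hi : IsImaginaryUnit i)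
    (f : ℍ → ℍ) (hcont : ContinuousOn f (Metric.closedBall 0 1))
    (C₀ : ℝ) (hC₀ : 0 < C₀)
    (hbd : ∀ x ∈ sliceCircle i, ∀ y ∈ sliceCircle i, |‖f x‖ - ‖f y‖| ≤ C₀ * ω ‖x - y‖)
    (C₁ : ℝ) (hC₁ : 0 < C₁)
    (hlip : ∀ x ∈ sliceDisc i, ∀ y ∈ sliceDisc i, ‖f x - f y‖ ≤ C₁ * ω ‖x - y‖) :
    ∃ C > 0, ∀ s : ℝ, (s = 1 ∨ s = -1) → ∀ q ∈ unitBall,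
      (∀ t ∈ Set.Icc (0:ℝ) (2 * Real.pi),
        (q * star (expI i t)).re ≤
          q.re * Real.cos t + s * (‖q - ((q.re : ℝ) : ℍ)‖ * Real.sin t)) →
      poisson i (fun z => ‖f z‖) q -
          2 * ‖f (((q.re : ℝ) : ℍ) + (s * ‖q - ((q.re : ℝ) : ℍ)‖) • i)‖ ≤
        C * ω (1 - ‖q‖) := by
  obtain ⟨K, hK, hKbound⟩ := hω.exists_integral_comp_chord_mul_circlePoissonKernel_le
  refine ⟨C₁ + (2 * π)⁻¹ * C₀ * K, by positivity, fun s hs q hq hcond ↦ ?_⟩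
  have hq_eq : q = (q.re : ℍ) + (s * ‖q - (q.re : ℍ)‖) • i :=
    hi.eq_re_add_smul_of_inner_eq (by rcases hs with rfl | rfl <;> norm_num)
      (inner_eq_of_forall_re_mul_star_expI_le fun t ht ↦ by rw [mul_assoc]; exact hcond t ht)
  obtain ⟨θ, hθ⟩ := hi.exists_eq_norm_smul_expI q.re (s * ‖q - (q.re : ℍ)‖)
  rw [← hq_eq] at hθ ⊢
  have hP := hi.poisson_smul_expI_le hω.1 (hKbound _ (norm_nonneg q) hq)
    (hcont.mono fun z hz ↦ mem_closedBall_zero_iff.mpr hz.2.le).norm hC₀.le hbd (norm_nonneg q) hq θ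
  have hB := hi.norm_apply_expI_sub_apply_smul_expI_le hω.1 hcont hC₁.le hlip (norm_nonneg q) hq θ
  rw [← hθ] at hP hB
  linarith [norm_sub_norm_le (f (expI i θ)) (f q), norm_nonneg (f q)]

theorem stmt19 (ω : ℝ → ℝ) (hω : IsRegularMajorant ω) (i : ℍ) (hi : IsImaginaryUnit i)
    (f : ℍ → ℍ) (hf : IsSliceRegular f) (hcont : ContinuousOn f (Metric.closedBall 0 1))
    (C₀ : ℝ) (hC₀ : 0 < C₀)
    (hbd : ∀ x ∈ sliceCircle i, ∀ y ∈ sliceCircle i, |‖f x‖ - ‖f y‖| ≤ C₀ * ω ‖x - y‖)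
    (C₁ : ℝ) (hC₁ : 0 < C₁)
    (hlip : ∀ x ∈ sliceDisc i, ∀ y ∈ sliceDisc i, ‖f x - f y‖ ≤ C₁ * ω ‖x - y‖) :
    ∃ C > 0, ∀ s : ℝ, (s = 1 ∨ s = -1) → ∀ q ∈ unitBall,
      (∀ t ∈ Set.Icc (0:ℝ) (2 * Real.pi),
        (q * star (expI i t)).re ≤
          q.re * Real.cos t + s * (‖q - ((q.re : ℝ) : ℍ)‖ * Real.sin t)) →
      poisson i (fun z => ‖f z‖) q -
          2 * ‖f (((q.re : ℝ) : ℍ) + (s * ‖q - ((q.re : ℝ) : ℍ)‖) • i)‖ ≤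
        C * ω (1 - ‖q‖) :=
  stmt19_general ω hω i hi f hcont C₀ hC₀ hbd C₁ hC₁ hlip
end
end
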